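/- Let ξ be uniform on [0,1], g : ℝ → ℝ measurable with finite Gagliardo seminorm [g]_{W^{α,2}(t,t+τ)} for some α ∈ (0,1), K ∈ ℝ, τ > 0. Then (𝔼|∫₀^τ e^{ig(t+r)K} dr − τ e^{ig(t+τξ)K}|²)^{1/2} ≤ τ^{α+1/2} |K| [g]_{W^{α,2}(t,t+τ)}, where [g]²_{W^{α,2}(t,t+τ)} = ∫_t^{t+τ}∫_t^{t+τ} |g(r)−g(s)|²/|r−s|^{2α+1} dr ds. -/

import Mathlib

/-!
Write `f r = exp (i g r K)` and `X = ∫ₜ^{t+τ} f − τ f(t + τξ)`. For a fixed node `c`,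
`X = ∫ (f r − f c) dr`, so Cauchy–Schwarz gives `|X|² ≤ τ ∫ |f r − f c|² dr`. Averaging over the
node, which is uniform on `[t, t + τ]`, cancels the factor `τ` and leaves the double integral
`∫∫ |f r − f s|² dr ds`. Since `exp (i · K)` is `|K|`-Lipschitz and `|r − s| ≤ τ` on the square,
`|f r − f s|² ≤ K² τ^{2α+1} |g r − g s|² / |r − s|^{2α+1}`; taking square roots gives the bound.
-/

open MeasureTheory Set
open scoped ENNReal

theorem norm_cexp_I_mul_mul_sub_cexp_I_mul_mul_le (K a b : ℝ) :
    ‖Complex.exp (Complex.I * a * K) - Complex.exp (Complex.I * b * K)‖ ≤ |K| * |a - b| := by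
  have hfactor : Complex.exp (Complex.I * a * K) - Complex.exp (Complex.I * b * K)
      = Complex.exp (Complex.I * ↑(b * K)) * (Complex.exp (Complex.I * ↑((a - b) * K)) - 1) := by
    rw [mul_sub, ← Complex.exp_add]; push_cast; ring_nf
  rw [hfactor, norm_mul, Complex.norm_exp_I_mul_ofReal, one_mul]
  refine Real.norm_exp_I_mul_ofReal_sub_one_le.trans_eq ?_
  rw [Real.norm_eq_abs, abs_mul, mul_comm]

theorem sq_lintegral_le_measure_univ_mul_lintegral_sq {α : Type*} [MeasurableSpace α]
    {μ : Measure α} {f : α → ℝ≥0∞} (hf : AEMeasurable f μ) :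
    (∫⁻ a, f a ∂μ) ^ 2 ≤ μ univ * ∫⁻ a, f a ^ 2 ∂μ := by
  have hsqrt (x : ℝ≥0∞) : (x ^ 2) ^ (2⁻¹ : ℝ) = x := by
    rw [← ENNReal.rpow_natCast, ← ENNReal.rpow_mul]; norm_num
  have hsq (x : ℝ≥0∞) : (x ^ (2⁻¹ : ℝ)) ^ 2 = x := by
    rw [← ENNReal.rpow_natCast, ← ENNReal.rpow_mul]; norm_num
  have holder := ENNReal.lintegral_mul_norm_pow_le (hf.pow_const 2) aemeasurable_const
    (by norm_num : (0 : ℝ) ≤ 2⁻¹) (by norm_num : (0 : ℝ) ≤ 2⁻¹) (by norm_num) (g := fun _ => 1)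
  simp only [hsqrt, ENNReal.one_rpow, mul_one, lintegral_const, one_mul] at holder
  simpa only [mul_pow, hsq, mul_comm] using pow_le_pow_left' holder 2

theorem enorm_integral_sq_le_measure_univ_mul {α E : Type*} [MeasurableSpace α]
    [NormedAddCommGroup E] [NormedSpace ℝ E] {μ : Measure α} {f : α → E}
    (hf : AEStronglyMeasurable f μ) :
    ‖∫ a, f a ∂μ‖ₑ ^ 2 ≤ μ univ * ∫⁻ a, ‖f a‖ₑ ^ 2 ∂μ :=
  (pow_le_pow_left' (enorm_integral_le_lintegral_enorm f) 2).trans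
    (sq_lintegral_le_measure_univ_mul_lintegral_sq hf.enorm)

theorem integral_norm_sq_le_of_lintegral_enorm_sq_le {α E : Type*} [MeasurableSpace α]
    [NormedAddCommGroup E] {μ : Measure α} {f : α → E} (hf : AEStronglyMeasurable f μ)
    {c : ℝ} (hc : 0 ≤ c) (h : ∫⁻ a, ‖f a‖ₑ ^ 2 ∂μ ≤ ENNReal.ofReal c) :
    ∫ a, ‖f a‖ ^ 2 ∂μ ≤ c := by
  simp_rw [← toReal_enorm, ← ENNReal.toReal_pow]
  rw [integral_toReal (hf.enorm.pow_const 2) (ae_of_all _ fun _ => ENNReal.pow_lt_top enorm_lt_top)]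
  exact ENNReal.toReal_le_of_le_ofReal hc h

theorem ofReal_mul_lintegral_comp_affine_of_map_eq_uniform {Ω : Type*} [MeasurableSpace Ω]
    {ℙ : Measure Ω} {ξ : Ω → ℝ} (hξ : Measurable ξ)
    (hunif : ℙ.map ξ = volume.restrict (Icc 0 1)) {h : ℝ → ℝ≥0∞} (hh : Measurable h)
    {τ : ℝ} (hτ : 0 < τ) (t : ℝ) :
    ENNReal.ofReal τ * ∫⁻ ω, h (t + τ * ξ ω) ∂ℙ = ∫⁻ s in Icc t (t + τ), h s := by
  have haffine : (fun x => τ * x + t) '' Icc 0 1 = Icc t (t + τ) := by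
    rw [image_affine_Icc' hτ]; simp [add_comm]
  have hmeas : Measurable fun x => h (t + τ * x) := hh.comp (by fun_prop)
  rw [← haffine, lintegral_image_eq_lintegral_abs_deriv_mul (f' := fun _ => τ) measurableSet_Icc
      (fun x _ => by simpa using ((hasDerivAt_id x).const_mul τ |>.add_const t).hasDerivWithinAt)
      (fun x _ y _ hxy => by simpa [hτ.ne'] using hxy),
    ← lintegral_map hmeas hξ, hunif, ← lintegral_const_mul _ hmeas, abs_of_pos hτ]
  simp_rw [add_comm _ t]

theorem enorm_intervalIntegral_sub_smul_sq_le {E : Type*} [NormedAddCommGroup E]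
    [NormedSpace ℝ E] [CompleteSpace E] {f : ℝ → E} {t τ : ℝ} (hτ : 0 ≤ τ)
    (hfi : IntegrableOn f (Ioc t (t + τ))) (c : ℝ) :
    ‖(∫ r in t..t + τ, f r) - τ • f c‖ₑ ^ 2
      ≤ ENNReal.ofReal τ * ∫⁻ r in Ioc t (t + τ), ‖f c - f r‖ₑ ^ 2 := by
  have hdiff : (∫ r in t..t + τ, f r) - τ • f c = ∫ r in Ioc t (t + τ), (f r - f c) := by
    rw [intervalIntegral.integral_of_le (by linarith),
      integral_sub hfi (integrableOn_const measure_Ioc_lt_top.ne), setIntegral_const,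
      Real.volume_real_Ioc_of_le (by linarith), add_sub_cancel_left]
  rw [hdiff]
  convert enorm_integral_sq_le_measure_univ_mul (f := fun r => f r - f c)
    (hfi.aestronglyMeasurable.sub aestronglyMeasurable_const) using 2
  · simp
  · simp_rw [enorm_sub_rev]

theorem lintegral_enorm_randomized_quadrature_error_sq_le {E : Type*} [NormedAddCommGroup E]
    [NormedSpace ℝ E] [CompleteSpace E] {Ω : Type*} [MeasurableSpace Ω]
    {ℙ : Measure Ω} {ξ : Ω → ℝ} (hξ : Measurable ξ)
    (hunif : ℙ.map ξ = volume.restrict (Icc 0 1)) {f : ℝ → E} (hf : StronglyMeasurable f)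
    {t τ : ℝ} (hτ : 0 < τ) (hfi : IntegrableOn f (Ioc t (t + τ))) :
    ∫⁻ ω, ‖(∫ r in t..t + τ, f r) - τ • f (t + τ * ξ ω)‖ₑ ^ 2 ∂ℙ
      ≤ ∫⁻ r in Ioc t (t + τ), ∫⁻ s in Ioc t (t + τ), ‖f r - f s‖ₑ ^ 2 := by
  set H : ℝ → ℝ≥0∞ := fun r => ∫⁻ s in Ioc t (t + τ), ‖f r - f s‖ₑ ^ 2
  have hH : Measurable H := Measurable.lintegral_prod_right' <|
    ((hf.comp_measurable measurable_fst).sub (hf.comp_measurable measurable_snd)).enorm.pow_const 2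
  calc ∫⁻ ω, ‖(∫ r in t..t + τ, f r) - τ • f (t + τ * ξ ω)‖ₑ ^ 2 ∂ℙ
      ≤ ∫⁻ ω, ENNReal.ofReal τ * H (t + τ * ξ ω) ∂ℙ :=
        lintegral_mono fun ω => enorm_intervalIntegral_sub_smul_sq_le hτ.le hfi _
    _ = ∫⁻ r in Icc t (t + τ), H r := by
        rw [lintegral_const_mul' _ _ ENNReal.ofReal_ne_top,
          ofReal_mul_lintegral_comp_affine_of_map_eq_uniform hξ hunif hH hτ]
    _ = ∫⁻ r in Ioc t (t + τ), H r := setLIntegral_congr Ioc_ae_eq_Icc.symm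

theorem sq_sub_le_rpow_mul_div_abs_rpow (u : ℝ → ℝ) {r s τ p : ℝ} (hrs : |r - s| ≤ τ)
    (hp : 0 ≤ p) : (u r - u s) ^ 2 ≤ τ ^ p * ((u r - u s) ^ 2 / |r - s| ^ p) := by
  rcases eq_or_ne r s with rfl | hne
  · simp
  have hpos : 0 < |r - s| ^ p := Real.rpow_pos_of_pos (abs_pos.2 (sub_ne_zero.2 hne)) p
  calc (u r - u s) ^ 2 = |r - s| ^ p * ((u r - u s) ^ 2 / |r - s| ^ p) := by field_simp
    _ ≤ τ ^ p * ((u r - u s) ^ 2 / |r - s| ^ p) := by gcongr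

theorem enorm_cexp_sub_sq_le_ofReal_mul (g : ℝ → ℝ) (K : ℝ) {r s τ p : ℝ} (hrs : |r - s| ≤ τ)
    (hp : 0 ≤ p) :
    ‖Complex.exp (Complex.I * g r * K) - Complex.exp (Complex.I * g s * K)‖ₑ ^ 2
      ≤ ENNReal.ofReal (K ^ 2 * τ ^ p) * ENNReal.ofReal ((g r - g s) ^ 2 / |r - s| ^ p) := by
  have hτ : 0 ≤ τ := (abs_nonneg _).trans hrs
  rw [← ofReal_norm, ← ENNReal.ofReal_pow (norm_nonneg _), ← ENNReal.ofReal_mul (by positivity)]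
  refine ENNReal.ofReal_le_ofReal ?_
  calc ‖Complex.exp (Complex.I * g r * K) - Complex.exp (Complex.I * g s * K)‖ ^ 2
      ≤ (|K| * |g r - g s|) ^ 2 := by
        gcongr
        exact norm_cexp_I_mul_mul_sub_cexp_I_mul_mul_le K _ _
    _ = K ^ 2 * (g r - g s) ^ 2 := by rw [mul_pow, sq_abs, sq_abs]
    _ ≤ K ^ 2 * τ ^ p * ((g r - g s) ^ 2 / |r - s| ^ p) := by
        rw [mul_assoc]
        gcongr
        exact sq_sub_le_rpow_mul_div_abs_rpow g hrs hp

theorem lintegral_lintegral_ofReal_eq_ofReal_intervalIntegral {F : ℝ × ℝ → ℝ} (hF : 0 ≤ F)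
    {a b : ℝ} (hab : a ≤ b) (hFi : IntegrableOn F (Ioo a b ×ˢ Ioo a b)) :
    ∫⁻ r in Ioc a b, ∫⁻ s in Ioc a b, ENNReal.ofReal (F (r, s))
      = ENNReal.ofReal (∫ r in a..b, ∫ s in a..b, F (r, s)) := by
  have hμ : (volume.restrict (Ioc a b)).prod (volume.restrict (Ioc a b))
      = volume.restrict (Ioo a b ×ˢ Ioo a b) := by
    rw [Measure.prod_restrict, ← Measure.volume_eq_prod]
    exact Measure.restrict_congr_set (Measure.set_prod_ae_eq Ioo_ae_eq_Ioc Ioo_ae_eq_Ioc).symm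
  have hFi' : Integrable F ((volume.restrict (Ioc a b)).prod (volume.restrict (Ioc a b))) := by
    rw [hμ]; exact hFi
  simp_rw [intervalIntegral.integral_of_le hab]
  rw [← integral_prod _ hFi', ofReal_integral_eq_lintegral_ofReal hFi' (ae_of_all _ hF),
    lintegral_prod _ hFi'.aemeasurable.ennreal_ofReal]

theorem lintegral_lintegral_enorm_cexp_sub_sq_le (g : ℝ → ℝ) (K : ℝ) {t τ p : ℝ}
    (hτ : 0 ≤ τ) (hp : 0 ≤ p)
    (hfin : IntegrableOn (fun z : ℝ × ℝ => (g z.1 - g z.2) ^ 2 / |z.1 - z.2| ^ p)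
      (Ioo t (t + τ) ×ˢ Ioo t (t + τ))) :
    ∫⁻ r in Ioc t (t + τ), ∫⁻ s in Ioc t (t + τ),
        ‖Complex.exp (Complex.I * g r * K) - Complex.exp (Complex.I * g s * K)‖ₑ ^ 2
      ≤ ENNReal.ofReal (K ^ 2 * τ ^ p *
          ∫ r in t..t + τ, ∫ s in t..t + τ, (g r - g s) ^ 2 / |r - s| ^ p) := by
  calc ∫⁻ r in Ioc t (t + τ), ∫⁻ s in Ioc t (t + τ),
        ‖Complex.exp (Complex.I * g r * K) - Complex.exp (Complex.I * g s * K)‖ₑ ^ 2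
      ≤ ∫⁻ r in Ioc t (t + τ), ∫⁻ s in Ioc t (t + τ),
          ENNReal.ofReal (K ^ 2 * τ ^ p) * ENNReal.ofReal ((g r - g s) ^ 2 / |r - s| ^ p) :=
        setLIntegral_mono' measurableSet_Ioc fun r hr =>
          setLIntegral_mono' measurableSet_Ioc fun s hs => enorm_cexp_sub_sq_le_ofReal_mul g K
            (abs_sub_le_iff.2 ⟨by linarith [hr.2, hs.1], by linarith [hs.2, hr.1]⟩) hp
    _ = _ := by
        simp_rw [lintegral_const_mul' _ _ ENNReal.ofReal_ne_top]
        rw [lintegral_lintegral_ofReal_eq_ofReal_intervalIntegral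
            (fun _ => by positivity) (by linarith) hfin, ← ENNReal.ofReal_mul (by positivity)]

theorem quadrature_error_sobolev_bound_general
    {Ω : Type*} [MeasurableSpace Ω] (ℙ : Measure Ω)
    (ξ : Ω → ℝ) (hξ : Measurable ξ)
    (hunif : Measure.map ξ ℙ = volume.restrict (Set.Icc (0 : ℝ) 1))
    (g : ℝ → ℝ) (hg : Measurable g) (α : ℝ) (hα : α ∈ Set.Ioo (0 : ℝ) 1)
    (τ t K : ℝ) (hτ : 0 < τ)
    -- finiteness of the Gagliardo seminorm of g on (t, t+τ)
    (hfin : IntegrableOn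
      (fun p : ℝ × ℝ => (g p.1 - g p.2) ^ 2 / |p.1 - p.2| ^ (2 * α + 1))
      (Set.Ioo t (t + τ) ×ˢ Set.Ioo t (t + τ)) volume) :
    Real.sqrt (∫ ω, ‖(∫ r in (0 : ℝ)..τ,
          Complex.exp (Complex.I * (g (t + r) : ℂ) * (K : ℂ)))
        - (τ : ℂ) * Complex.exp (Complex.I * (g (t + τ * ξ ω) : ℂ) * (K : ℂ))‖ ^ 2 ∂ℙ)
      ≤ τ ^ (α + 1 / 2) * |K| *
        Real.sqrt (∫ r in t..(t + τ), ∫ s in t..(t + τ),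
          (g r - g s) ^ 2 / |r - s| ^ (2 * α + 1)) := by
  set f : ℝ → ℂ := fun r => Complex.exp (Complex.I * g r * K)
  set S := ∫ r in t..(t + τ), ∫ s in t..(t + τ), (g r - g s) ^ 2 / |r - s| ^ (2 * α + 1)
  have hf : Measurable f := by fun_prop
  have hfi : IntegrableOn f (Ioc t (t + τ)) :=
    (integrableOn_const measure_Ioc_lt_top.ne (C := (1 : ℝ))).mono' hf.aestronglyMeasurable
      (ae_of_all _ fun r => by simp [f, Complex.norm_exp])
  have hS : 0 ≤ S := intervalIntegral.integral_nonneg (by linarith) fun r _ =>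
    intervalIntegral.integral_nonneg (by linarith) fun s _ => by positivity
  have hmean : ∫ ω, ‖(∫ r in t..t + τ, f r) - τ • f (t + τ * ξ ω)‖ ^ 2 ∂ℙ
      ≤ K ^ 2 * τ ^ (2 * α + 1) * S :=
    integral_norm_sq_le_of_lintegral_enorm_sq_le
      (by fun_prop : Measurable _).aestronglyMeasurable (by positivity) <|
      (lintegral_enorm_randomized_quadrature_error_sq_le hξ hunif hf.stronglyMeasurable hτ
        hfi).trans (lintegral_lintegral_enorm_cexp_sub_sq_le g K hτ.le (by linarith [hα.1]) hfin)
  have hshift : ∫ r in (0 : ℝ)..τ, Complex.exp (Complex.I * (g (t + r) : ℂ) * (K : ℂ))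
      = ∫ r in t..t + τ, f r := by
    rw [intervalIntegral.integral_comp_add_left f t, add_zero]
  simp only [hshift, ← Complex.real_smul]
  calc _ ≤ √(K ^ 2 * τ ^ (2 * α + 1) * S) := Real.sqrt_le_sqrt hmean
    _ = τ ^ (α + 1 / 2) * |K| * √S := by
        rw [Real.sqrt_mul (by positivity), Real.sqrt_mul (sq_nonneg K), Real.sqrt_sq_eq_abs,
          Real.sqrt_eq_rpow, ← Real.rpow_mul hτ.le]
        ring_nf

/-- One-step error estimate for the randomized quadrature:
`(𝔼|∫₀^τ e^{ig(t+r)K}dr − τe^{ig(t+τξ)K}|²)^{1/2}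
  ≤ τ^{α+1/2} |K| [g]_{W^{α,2}(t,t+τ)}`. -/
theorem quadrature_error_sobolev_bound
    {Ω : Type*} [MeasurableSpace Ω] (ℙ : Measure Ω) [IsProbabilityMeasure ℙ]
    (ξ : Ω → ℝ) (hξ : Measurable ξ)
    (hunif : Measure.map ξ ℙ = volume.restrict (Set.Icc (0 : ℝ) 1))
    (g : ℝ → ℝ) (hg : Measurable g) (α : ℝ) (hα : α ∈ Set.Ioo (0 : ℝ) 1)
    (τ t K : ℝ) (hτ : 0 < τ)
    -- finiteness of the Gagliardo seminorm of g on (t, t+τ)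
    (hfin : IntegrableOn
      (fun p : ℝ × ℝ => (g p.1 - g p.2) ^ 2 / |p.1 - p.2| ^ (2 * α + 1))
      (Set.Ioo t (t + τ) ×ˢ Set.Ioo t (t + τ)) volume) :
    Real.sqrt (∫ ω, ‖(∫ r in (0 : ℝ)..τ,
          Complex.exp (Complex.I * (g (t + r) : ℂ) * (K : ℂ)))
        - (τ : ℂ) * Complex.exp (Complex.I * (g (t + τ * ξ ω) : ℂ) * (K : ℂ))‖ ^ 2 ∂ℙ)
      ≤ τ ^ (α + 1 / 2) * |K| *
        Real.sqrt (∫ r in t..(t + τ), ∫ s in t..(t + τ),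
          (g r - g s) ^ 2 / |r - s| ^ (2 * α + 1)) :=
  quadrature_error_sobolev_bound_general ℙ ξ hξ hunif g hg α hα τ t K hτ hfin
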